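/- Let K₁, K₂ ⊆ ℝⁿ be closed sets such that K₁ is derivable on ∂K₁ ∩ ∂K₂, i.e. T_{K₁}(x) = T^a_{K₁}(x) for all x ∈ ∂K₁ ∩ ∂K₂. Let x₀ ∈ ∂K₁ ∩ ∂K₂ and assume the transversality condition (◇): there exist a neighborhood N(x₀) of x₀, c > 0 and α ∈ [0,1) such that for all x₁ ∈ (∂K₁ \ K₂) ∩ N(x₀) and x₂ ∈ (∂K₂ \ K₁) ∩ N(x₀) there exist v₁ ∈ T_{K₁}(x₁) and v₂ ∈ T_{K₂}(x₂) with |(v₁,v₂)| ≤ c·|x₁ − x₂| and x₂ − x₁ ∈ v₁ − v₂ + α·|x₁ − x₂|·𝔹. Then T_{K₁}(x₀) ∩ T_{K₂}(x₀) = T_{K₁ ∩ K₂}(x₀). -/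

import Mathlib

open MeasureTheory Filter Topology Set
open scoped RealInnerProductSpace

/-- Euclidean space ℝⁿ. -/
abbrev Euc (n : ℕ) := EuclideanSpace ℝ (Fin n)

variable {E : Type*} [NormedAddCommGroup E] [InnerProductSpace ℝ E]

/-- The contingent (Bouligand) cone to `S` at `x`:
`v` belongs to it iff there are sequences `tᵢ → 0⁺` and `vᵢ → v` with `x + tᵢ • vᵢ ∈ S`. -/
def contingentCone (S : Set E) (x : E) : Set E :=
  {v | ∃ t : ℕ → ℝ, ∃ w : ℕ → E,
    (∀ i, 0 < t i) ∧ Tendsto t atTop (𝓝 0) ∧ Tendsto w atTop (𝓝 v) ∧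
    ∀ i, x + t i • w i ∈ S}

/-- The adjacent cone to `S` at `x`:
`v` belongs to it iff for every sequence `tᵢ → 0⁺` there is `vᵢ → v` with `x + tᵢ • vᵢ ∈ S`. -/
def adjacentCone (S : Set E) (x : E) : Set E :=
  {v | ∀ t : ℕ → ℝ, (∀ i, 0 < t i) → Tendsto t atTop (𝓝 0) →
    ∃ w : ℕ → E, Tendsto w atTop (𝓝 v) ∧ ∀ i, x + t i • w i ∈ S}

/-- The Dubovitskiy cone to `S` at `x`. -/
def dubovitskiyCone (S : Set E) (x : E) : Set E :=
  {v | ∀ t : ℕ → ℝ, ∀ w : ℕ → E, (∀ i, 0 < t i) → Tendsto t atTop (𝓝 0) →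
    Tendsto w atTop (𝓝 v) → ∀ᶠ i in atTop, x + t i • w i ∈ interior S}

/-- Lower semicontinuity of a set-valued map at a point along a filter `l`. -/
def SVLowerSemicontinuousAt (F : E → Set E) (l : Filter E) (x : E) : Prop :=
  ∀ U : Set E, IsOpen U → (F x ∩ U).Nonempty → ∀ᶠ y in l, (F y ∩ U).Nonempty

/-- Upper semicontinuity of a set-valued map at a point along a filter `l`. -/
def SVUpperSemicontinuousAt (F : E → Set E) (l : Filter E) (x : E) : Prop :=
  ∀ U : Set E, IsOpen U → F x ⊆ U → ∀ᶠ y in l, F y ⊆ U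

/-- Continuity (lower and upper semicontinuity) of a set-valued map at `x` along `l`. -/
def SVContinuousAt (F : E → Set E) (l : Filter E) (x : E) : Prop :=
  SVLowerSemicontinuousAt F l x ∧ SVUpperSemicontinuousAt F l x

/-- Continuity of a set-valued map. -/
def SVContinuous (F : E → Set E) : Prop := ∀ x, SVContinuousAt F (𝓝 x) x

/-- Local boundedness of a set-valued map. -/
def SVLocallyBounded (F : E → Set E) : Prop :=
  ∀ x : E, ∃ N ∈ 𝓝 x, ∃ M : ℝ, ∀ y ∈ N, ∀ v ∈ F y, ‖v‖ ≤ M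

/-- One-sided local Lipschitz continuity of a set-valued map. -/
def OneSidedLocallyLipschitz (F : E → Set E) : Prop :=
  ∀ N : Set E, N.Nonempty → IsCompact N → ∃ k > 0, ∀ x₁ ∈ N, ∀ x₂ ∈ N,
    ∀ w₁ ∈ F x₁, ∃ w₂ ∈ F x₂, ⟪x₁ - x₂, w₁⟫ ≤ ⟪x₁ - x₂, w₂⟫ + k * ‖x₁ - x₂‖ ^ 2

/-- The standing assumption (SA): `C` closed; `F x` nonempty, closed, convex on `C`;
`F` continuous and one-sided locally Lipschitz. -/
structure StandingAssumption (F : E → Set E) (C : Set E) : Prop where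
  closed_C : IsClosed C
  nonempty_images : ∀ x ∈ C, (F x).Nonempty
  closed_images : ∀ x ∈ C, IsClosed (F x)
  convex_images : ∀ x ∈ C, Convex ℝ (F x)
  continuous : SVContinuous F
  osLipschitz : OneSidedLocallyLipschitz F

/-- Admissible solution domains: `[0,T]` with `T ≥ 0`, or `[0,T)` with `T ∈ (0,∞]`. -/
def IsSolDomain (D : Set ℝ) : Prop :=
  (∃ T : ℝ, 0 ≤ T ∧ D = Icc 0 T) ∨ (∃ T : ℝ, 0 < T ∧ D = Ico 0 T) ∨ D = Ici 0

/-- `φ` is a solution of the constrained differential inclusion `ẋ ∈ F(x)`, `x ∈ C`,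
on the domain `D`: it stays in `C` and is a locally absolutely continuous arc whose
derivative is an integrable selection of `F ∘ φ` almost everywhere. -/
def IsSolution (F : E → Set E) (C : Set E) (D : Set ℝ) (φ : ℝ → E) : Prop :=
  IsSolDomain D ∧ (∀ t ∈ D, φ t ∈ C) ∧
  ∃ g : ℝ → E,
    (∀ᵐ t ∂(volume.restrict D), g t ∈ F (φ t)) ∧
    ∀ t ∈ D, IntervalIntegrable g volume 0 t ∧ φ t = φ 0 + ∫ s in (0:ℝ)..t, g s

/-- Forward invariance of `K` for the constrained differential inclusion. -/
def ForwardInvariant (F : E → Set E) (C K : Set E) : Prop :=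
  ∀ D : Set ℝ, ∀ φ : ℝ → E, IsSolution F C D φ → φ 0 ∈ K → ∀ t ∈ D, φ t ∈ K

/-- The set 𝒫 of critical points: points of `∂K ∩ ∂C` every neighborhood of which
meets `C \ K`. -/
def critSet (K C : Set E) : Set E :=
  {x | x ∈ frontier K ∩ frontier C ∧ ∀ N ∈ 𝓝 x, (N ∩ (C \ K)).Nonempty}

/-- The set of initial speeds `F_φ(x)` of an arc `φ` at `x`. -/
def initialSpeeds (φ : ℝ → E) (x : E) : Set E :=
  {v | ∃ t : ℕ → ℝ, (∀ i, 0 < t i) ∧ Tendsto t atTop (𝓝 0) ∧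
    Tendsto (fun i => (t i)⁻¹ • (φ (t i) - x)) atTop (𝓝 v)}

/-- The metric projection of `y` onto `S`. -/
def projSet (S : Set E) (y : E) : Set E := {z ∈ S | dist y z = Metric.infDist y S}

/-- `φ` leaves `K` immediately: for some `T > 0`, `φ(t) ∈ C \ K` on `(0,T]`. -/
def LeavesImmediately (K C : Set E) (D : Set ℝ) (φ : ℝ → E) : Prop :=
  ∃ T > 0, Ioc 0 T ⊆ D ∧ ∀ t ∈ Ioc 0 T, φ t ∈ C \ K

/-- Property (★): for some `T > 0`, `Proj_{∂K}(φ(t)) ∩ int C ≠ ∅` on `(0,T]`. -/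
def PropStar (K C : Set E) (D : Set ℝ) (φ : ℝ → E) : Prop :=
  ∃ T > 0, Ioc 0 T ⊆ D ∧
    ∀ t ∈ Ioc 0 T, (projSet (frontier K) (φ t) ∩ interior C).Nonempty

/-- Euclidean norm of the concatenated vector `(v₁, v₂) ∈ ℝ²ⁿ`. -/
noncomputable def pairNorm (v₁ v₂ : E) : ℝ := Real.sqrt (‖v₁‖ ^ 2 + ‖v₂‖ ^ 2)

/-- Assumption 1: `F(x) ⊆ T_K(x)` on 𝒫. -/
def Assumption1 (F : E → Set E) (K C : Set E) : Prop :=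
  ∀ x ∈ critSet K C, F x ⊆ contingentCone K x

/-- Assumption 2: `F(x) ∩ T_{∂K ∩ ∂C}(x) = ∅` on 𝒫. -/
def Assumption2 (F : E → Set E) (K C : Set E) : Prop :=
  ∀ x ∈ critSet K C, F x ∩ contingentCone (frontier K ∩ frontier C) x = ∅

/-- Assumption 3 (transversality) at a point `x`. -/
def Assumption3At (K C : Set E) (x : E) : Prop :=
  contingentCone (frontier K) x = adjacentCone (frontier K) x ∧
  contingentCone C x = adjacentCone C x ∧
  ∃ N ∈ 𝓝 x, ∃ c > 0, ∃ α ∈ Ico (0:ℝ) 1,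
    ∀ x₁ ∈ (frontier K \ C) ∩ N, ∀ x₂ ∈ (frontier C \ frontier K) ∩ N,
      ∃ v₁ ∈ contingentCone (frontier K) x₁, ∃ v₂ ∈ contingentCone C x₂,
        pairNorm v₁ v₂ ≤ c * ‖x₁ - x₂‖ ∧ ‖(x₂ - x₁) - (v₁ - v₂)‖ ≤ α * ‖x₁ - x₂‖

/-- Assumption 3 (transversality) on 𝒫. -/
def Assumption3 (K C : Set E) : Prop := ∀ x ∈ critSet K C, Assumption3At K C x

/-- The transversality condition (◇) for a pair of sets at `x₀`. -/
def TransversalAt (K₁ K₂ : Set E) (x₀ : E) : Prop :=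
  ∃ N ∈ 𝓝 x₀, ∃ c > 0, ∃ α ∈ Ico (0:ℝ) 1,
    ∀ x₁ ∈ (frontier K₁ \ K₂) ∩ N, ∀ x₂ ∈ (frontier K₂ \ K₁) ∩ N,
      ∃ v₁ ∈ contingentCone K₁ x₁, ∃ v₂ ∈ contingentCone K₂ x₂,
        pairNorm v₁ v₂ ≤ c * ‖x₁ - x₂‖ ∧ ‖(x₂ - x₁) - (v₁ - v₂)‖ ≤ α * ‖x₁ - x₂‖

/-!
The nontrivial inclusion rests on a local error bound: for `y ∈ K₁` and `z ∈ K₂` near `x₀` there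
is `p ∈ K₁ ∩ K₂` with `‖p - y‖ ≤ A ‖y - z‖`. If `v` is contingent to `K₂` along `tᵢ`, derivability
of `K₁` at `x₀` (`T = Tᵃ`) provides points of `K₁` along the same `tᵢ`, and the error bound moves
them into `K₁ ∩ K₂` at cost `o(tᵢ)`.

For the error bound, minimise `‖y' - z'‖ + ρ (‖y' - y‖ + ‖z' - z‖)` over `K₁ × K₂`. If the
minimiser is not in `K₁ ∩ K₂`, then `y' ∈ ∂K₁ \ K₂` and `z' ∈ ∂K₂ \ K₁`, and first-order
optimality along the directions `v₁, v₂` given by (◇) yields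
`⟪y' - z', v₁ - v₂⟫ ≥ -2ρc ‖y' - z'‖²`, whereas (◇) forces
`⟪y' - z', v₁ - v₂⟫ ≤ -(1 - α) ‖y' - z'‖²`. This is impossible once `2ρc < 1 - α`.
-/

section Normed

variable {X : Type*} [NormedAddCommGroup X]

lemma norm_le_pairNorm_left (v₁ v₂ : X) : ‖v₁‖ ≤ pairNorm v₁ v₂ := by
  rw [← abs_norm v₁]
  exact Real.abs_le_sqrt (le_add_of_nonneg_right (sq_nonneg _))

lemma norm_le_pairNorm_right (v₁ v₂ : X) : ‖v₂‖ ≤ pairNorm v₁ v₂ := by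
  rw [← abs_norm v₂]
  exact Real.abs_le_sqrt (le_add_of_nonneg_left (sq_nonneg _))

def IsLocalQuasiNearest (ρ : ℝ) (S : Set X) (z x : X) : Prop :=
  ∀ᶠ u in 𝓝[S] x, ‖x - z‖ ≤ ‖u - z‖ + ρ * ‖u - x‖

lemma exists_isLocalQuasiNearest_pair [ProperSpace X] {K₁ K₂ : Set X} (hK₁ : IsClosed K₁)
    (hK₂ : IsClosed K₂) {ρ : ℝ} (hρ : 0 < ρ) {y z : X} (hy : y ∈ K₁) (hz : z ∈ K₂) :
    ∃ y' ∈ K₁, ∃ z' ∈ K₂, ‖y' - z'‖ + ρ * (‖y' - y‖ + ‖z' - z‖) ≤ ‖y - z‖ ∧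
      IsLocalQuasiNearest ρ K₁ z' y' ∧ IsLocalQuasiNearest ρ K₂ y' z' := by
  set g : X × X → ℝ := fun q => ‖q.1 - q.2‖ + ρ * (‖q.1 - y‖ + ‖q.2 - z‖)
  have hcoercive : ∀ᶠ q in cocompact (X × X) ⊓ 𝓟 (K₁ ×ˢ K₂), g (y, z) ≤ g q := by
    refine Eventually.filter_mono inf_le_left ?_
    filter_upwards [(tendsto_dist_right_cocompact_atTop (y, z)).eventually_ge_atTop
      (‖y - z‖ / ρ)] with q hq
    rw [Prod.dist_eq, dist_eq_norm, dist_eq_norm, div_le_iff₀ hρ] at hq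
    have := max_le_add_of_nonneg (norm_nonneg (q.1 - y)) (norm_nonneg (q.2 - z))
    simp only [g, sub_self, norm_zero, add_zero, mul_zero]
    nlinarith [norm_nonneg (q.1 - q.2)]
  have hyz : (y, z) ∈ K₁ ×ˢ K₂ := ⟨hy, hz⟩
  obtain ⟨⟨y', z'⟩, ⟨hy', hz'⟩, hmin⟩ :=
    (by fun_prop : Continuous g).continuousOn.exists_isMinOn' (hK₁.prod hK₂) hyz hcoercive
  refine ⟨y', hy', z', hz', by simpa [g] using hmin hyz,
    eventually_nhdsWithin_of_forall fun u hu => ?_, eventually_nhdsWithin_of_forall fun u hu => ?_⟩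
  · have hle : g (y', z') ≤ g (u, z') := hmin ⟨hu, hz'⟩
    have := norm_sub_le_norm_sub_add_norm_sub u y' y
    simp only [g] at hle
    nlinarith
  · have hle : g (y', z') ≤ g (y', u) := hmin ⟨hy', hu⟩
    have := norm_sub_le_norm_sub_add_norm_sub u z' z
    simp only [g] at hle
    rw [norm_sub_rev z' y', norm_sub_rev u y']
    nlinarith

/-- Subtransversality (local linear regularity) of `K₁, K₂` at `x₀`, in a two-point form that
avoids distance functions. -/
def IsLinearlyRegularAt (K₁ K₂ : Set X) (x₀ : X) : Prop :=
  ∃ A : ℝ, ∀ᶠ q : X × X in 𝓝 (x₀, x₀), q.1 ∈ K₁ → q.2 ∈ K₂ →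
    ∃ p ∈ K₁ ∩ K₂, ‖p - q.1‖ ≤ A * ‖q.1 - q.2‖

end Normed

lemma hasFDerivAt_norm_sub {x z : E} (h : x ≠ z) :
    HasFDerivAt (fun u => ‖u - z‖) (‖x - z‖⁻¹ • innerSL ℝ (x - z)) x := by
  have hx : ‖x - z‖ ≠ 0 := norm_ne_zero_iff.2 (sub_ne_zero.2 h)
  convert ((hasFDerivAt_id x).sub_const z).norm_sq.sqrt (pow_ne_zero 2 hx) using 1
  · funext u; simp
  · ext v; simp [mul_assoc]

section ContingentCone

variable {S : Set E} {x v : E}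

lemma contingentCone_mono {T : Set E} (h : S ⊆ T) :
    contingentCone S x ⊆ contingentCone T x :=
  fun _ ⟨t, w, ht0, ht, hw, hS⟩ => ⟨t, w, ht0, ht, hw, fun i => h (hS i)⟩

lemma mem_contingentCone_of_forall_exists {t ε : ℕ → ℝ} {w : ℕ → E}
    (ht0 : ∀ i, 0 < t i) (ht : Tendsto t atTop (𝓝 0)) (hw : Tendsto w atTop (𝓝 v))
    (hε : Tendsto ε atTop (𝓝 0)) (hS : ∀ i, ∃ p ∈ S, ‖p - (x + t i • w i)‖ ≤ t i * ε i) :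
    v ∈ contingentCone S x := by
  choose p hpS hp using hS
  have hclose : ∀ i, ‖(t i)⁻¹ • (p i - x) - w i‖ ≤ ε i := fun i => calc
    ‖(t i)⁻¹ • (p i - x) - w i‖ = ‖(t i)⁻¹ • (p i - (x + t i • w i))‖ := by
      rw [sub_add_eq_sub_sub, smul_sub _ (p i - x), inv_smul_smul₀ (ht0 i).ne']
    _ = (t i)⁻¹ * ‖p i - (x + t i • w i)‖ := norm_smul_of_nonneg (inv_nonneg.2 (ht0 i).le) _
    _ ≤ ε i := by rw [inv_mul_le_iff₀ (ht0 i)]; exact hp i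
  refine ⟨t, fun i => (t i)⁻¹ • (p i - x), ht0, ht, ?_, fun i => ?_⟩
  · simpa using (squeeze_zero_norm hclose hε).add hw
  · simpa [smul_inv_smul₀ (ht0 i).ne'] using hpS i

lemma mem_contingentCone_of_eventually_exists {t ε : ℕ → ℝ} {w : ℕ → E}
    (ht0 : ∀ i, 0 < t i) (ht : Tendsto t atTop (𝓝 0)) (hw : Tendsto w atTop (𝓝 v))
    (hε : Tendsto ε atTop (𝓝 0))
    (hS : ∀ᶠ i in atTop, ∃ p ∈ S, ‖p - (x + t i • w i)‖ ≤ t i * ε i) :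
    v ∈ contingentCone S x := by
  obtain ⟨N, hN⟩ := eventually_atTop.1 hS
  have hshift := tendsto_add_atTop_nat N
  exact mem_contingentCone_of_forall_exists (fun i => ht0 _) (ht.comp hshift) (hw.comp hshift)
    (hε.comp hshift) fun i => hN _ (Nat.le_add_left N i)

lemma mem_contingentCone_of_mem_interior (hx : x ∈ interior S) (v : E) :
    v ∈ contingentCone S x := by
  have ht : Tendsto (fun i : ℕ => 1 / ((i : ℝ) + 1)) atTop (𝓝 0) :=
    tendsto_one_div_add_atTop_nhds_zero_nat
  have hx' : Tendsto (fun i : ℕ => x + (1 / ((i : ℝ) + 1)) • v) atTop (𝓝 x) := by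
    simpa using tendsto_const_nhds.add (ht.smul_const v)
  refine mem_contingentCone_of_eventually_exists (fun i => Nat.one_div_pos_of_nat) ht
    tendsto_const_nhds (tendsto_const_nhds (x := (0 : ℝ))) ?_
  filter_upwards [hx'.eventually (mem_interior_iff_mem_nhds.1 hx)] with i hi
  exact ⟨x + (1 / ((i : ℝ) + 1)) • v, hi, by simp⟩

lemma neg_mul_norm_le_of_mem_contingentCone {f : E → ℝ} {f' : E →L[ℝ] ℝ} {ρ : ℝ}
    (hf : HasFDerivAt f f' x)
    (hmin : ∀ᶠ u in 𝓝[S] x, f x ≤ f u + ρ * ‖u - x‖) (hv : v ∈ contingentCone S x) :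
    -(ρ * ‖v‖) ≤ f' v := by
  obtain ⟨t, w, ht0, ht, hw, hS⟩ := hv
  have hd : Tendsto (fun i => t i • w i) atTop (𝓝 0) := by simpa using ht.smul hw
  have hlim := hf.hasFDerivWithinAt.lim (s := S) (c := fun i => (t i)⁻¹) hd (.of_forall hS)
    (hw.congr fun i => (inv_smul_smul₀ (ht0 i).ne' (w i)).symm)
  have hpts : Tendsto (fun i => x + t i • w i) atTop (𝓝[S] x) :=
    tendsto_nhdsWithin_iff.2 ⟨by simpa using tendsto_const_nhds.add hd, .of_forall hS⟩
  refine le_of_tendsto_of_tendsto (hw.norm.const_mul ρ).neg hlim ?_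
  filter_upwards [hpts.eventually hmin] with i hi
  rw [add_sub_cancel_left, norm_smul_of_nonneg (ht0 i).le] at hi
  rw [smul_eq_mul, le_inv_mul_iff₀ (ht0 i)]
  linarith [mul_left_comm ρ (t i) ‖w i‖]

end ContingentCone

section QuasiNearest

variable {S : Set E} {ρ : ℝ} {x z : E}

lemma IsLocalQuasiNearest.neg_mul_le_inner (h : IsLocalQuasiNearest ρ S z x) {v : E}
    (hv : v ∈ contingentCone S x) : -(ρ * ‖x - z‖ * ‖v‖) ≤ ⟪x - z, v⟫ := by
  rcases eq_or_ne x z with rfl | hxz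
  · simp
  have hd : 0 < ‖x - z‖ := norm_pos_iff.2 (sub_ne_zero.2 hxz)
  have := neg_mul_norm_le_of_mem_contingentCone (hasFDerivAt_norm_sub hxz) h hv
  simp only [smul_apply, innerSL_apply_apply, smul_eq_mul, le_inv_mul_iff₀ hd] at this
  linarith

lemma IsLocalQuasiNearest.mem_frontier (h : IsLocalQuasiNearest ρ S z x) (hx : x ∈ S)
    (hxz : x ≠ z) (hρ : ρ < 1) : x ∈ frontier S := by
  refine ⟨subset_closure hx, fun hint => ?_⟩
  -- `‖· - z‖` decreases at rate `1 > ρ` in the direction `z - x`, which is tangent at an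
  -- interior point.
  have := h.neg_mul_le_inner (mem_contingentCone_of_mem_interior hint (z - x))
  rw [norm_sub_rev z x, ← neg_sub x z, inner_neg_right, real_inner_self_eq_norm_sq] at this
  have hd : 0 < ‖x - z‖ := norm_pos_iff.2 (sub_ne_zero.2 hxz)
  nlinarith [mul_pos (sub_pos.2 hρ) (mul_pos hd hd)]

end QuasiNearest

lemma one_sub_le_of_isLocalQuasiNearest {K₁ K₂ N : Set E} {ρ c α : ℝ}
    (htr : ∀ x₁ ∈ (frontier K₁ \ K₂) ∩ N, ∀ x₂ ∈ (frontier K₂ \ K₁) ∩ N,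
      ∃ v₁ ∈ contingentCone K₁ x₁, ∃ v₂ ∈ contingentCone K₂ x₂,
        pairNorm v₁ v₂ ≤ c * ‖x₁ - x₂‖ ∧ ‖(x₂ - x₁) - (v₁ - v₂)‖ ≤ α * ‖x₁ - x₂‖)
    (hρ0 : 0 ≤ ρ) (hρ1 : ρ < 1) {y z : E} (hy : y ∈ (K₁ \ K₂) ∩ N) (hz : z ∈ (K₂ \ K₁) ∩ N)
    (h₁ : IsLocalQuasiNearest ρ K₁ z y) (h₂ : IsLocalQuasiNearest ρ K₂ y z) :
    1 - α ≤ 2 * ρ * c := by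
  have hyz : y ≠ z := fun h => hy.1.2 (h ▸ hz.1.1)
  have hd : 0 < ‖y - z‖ := norm_pos_iff.2 (sub_ne_zero.2 hyz)
  obtain ⟨v₁, hv₁, v₂, hv₂, hpair, herr⟩ :=
    htr y ⟨⟨h₁.mem_frontier hy.1.1 hyz hρ1, hy.1.2⟩, hy.2⟩
      z ⟨⟨h₂.mem_frontier hz.1.1 hyz.symm hρ1, hz.1.2⟩, hz.2⟩
  have hi₁ := h₁.neg_mul_le_inner hv₁
  have hi₂ := h₂.neg_mul_le_inner hv₂
  rw [norm_sub_rev z y] at hi₂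
  have hcs : ⟪y - z, (v₁ - v₂) - (z - y)⟫ ≤ ‖y - z‖ * (α * ‖y - z‖) :=
    (real_inner_le_norm _ _).trans
      (mul_le_mul_of_nonneg_left (by rwa [norm_sub_rev]) (norm_nonneg _))
  have hsplit : ⟪y - z, (v₁ - v₂) - (z - y)⟫ = ⟪y - z, v₁⟫ + ⟪z - y, v₂⟫ + ‖y - z‖ ^ 2 := by
    rw [show v₁ - v₂ - (z - y) = v₁ - v₂ + (y - z) by abel, inner_add_right, inner_sub_right,
      real_inner_self_eq_norm_sq, ← neg_sub y z, inner_neg_left]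
    ring
  have hb₁ := (norm_le_pairNorm_left v₁ v₂).trans hpair
  have hb₂ := (norm_le_pairNorm_right v₁ v₂).trans hpair
  have hρd : 0 ≤ ρ * ‖y - z‖ := mul_nonneg hρ0 hd.le
  have : (1 - α) * ‖y - z‖ ^ 2 ≤ (2 * ρ * c) * ‖y - z‖ ^ 2 := by
    nlinarith [mul_le_mul_of_nonneg_left hb₁ hρd, mul_le_mul_of_nonneg_left hb₂ hρd]
  exact le_of_mul_le_mul_right this (by positivity)

lemma TransversalAt.isLinearlyRegularAt [ProperSpace E] {K₁ K₂ : Set E} {x₀ : E}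
    (hK₁ : IsClosed K₁) (hK₂ : IsClosed K₂) (htrans : TransversalAt K₁ K₂ x₀) :
    IsLinearlyRegularAt K₁ K₂ x₀ := by
  obtain ⟨N, hN, c, hc, α, ⟨hα0, hα1⟩, htr⟩ := htrans
  obtain ⟨R, hR, hRN⟩ := Metric.nhds_basis_closedBall.mem_iff.1 hN
  set ρ := (1 - α) / (2 * (c + 1))
  have hρ0 : 0 < ρ := div_pos (by linarith) (by linarith)
  have hρ1 : ρ < 1 := by rw [div_lt_one (by linarith)]; linarith
  have hρc : 2 * ρ * c < 1 - α := by
    have : ρ * (2 * (c + 1)) = 1 - α := div_mul_cancel₀ _ (by linarith)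
    nlinarith
  have hnear : ∀ᶠ q : E × E in 𝓝 (x₀, x₀), ‖q.1 - x₀‖ + ‖q.2 - x₀‖ + ρ⁻¹ * ‖q.1 - q.2‖ < R :=
    ((by fun_prop : Continuous fun q : E × E =>
      ‖q.1 - x₀‖ + ‖q.2 - x₀‖ + ρ⁻¹ * ‖q.1 - q.2‖).tendsto _).eventually (gt_mem_nhds (by simpa))
  refine ⟨ρ⁻¹ + 1, ?_⟩
  filter_upwards [hnear] with ⟨y, z⟩ hyz hy hz
  obtain ⟨y', hy', z', hz', hle, h₁, h₂⟩ := exists_isLocalQuasiNearest_pair hK₁ hK₂ hρ0 hy hz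
  have hy'y : ‖y' - y‖ ≤ ρ⁻¹ * ‖y - z‖ := by
    rw [le_inv_mul_iff₀ hρ0]; nlinarith [norm_nonneg (y' - z'), norm_nonneg (z' - z)]
  have hz'z : ‖z' - z‖ ≤ ρ⁻¹ * ‖y - z‖ := by
    rw [le_inv_mul_iff₀ hρ0]; nlinarith [norm_nonneg (y' - z'), norm_nonneg (y' - y)]
  by_cases hy'₂ : y' ∈ K₂
  · exact ⟨y', ⟨hy', hy'₂⟩, by nlinarith [norm_nonneg (y - z)]⟩
  by_cases hz'₁ : z' ∈ K₁
  · refine ⟨z', ⟨hz'₁, hz'⟩, ?_⟩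
    linarith [norm_sub_le_norm_sub_add_norm_sub z' z y, norm_sub_rev z y]
  have hy'N : y' ∈ N := hRN (mem_closedBall_iff_norm.2 (by
    linarith [norm_sub_le_norm_sub_add_norm_sub y' y x₀, norm_nonneg (z - x₀)]))
  have hz'N : z' ∈ N := hRN (mem_closedBall_iff_norm.2 (by
    linarith [norm_sub_le_norm_sub_add_norm_sub z' z x₀, norm_nonneg (y - x₀)]))
  exact absurd (one_sub_le_of_isLocalQuasiNearest htr hρ0.le hρ1 ⟨⟨hy', hy'₂⟩, hy'N⟩
    ⟨⟨hz', hz'₁⟩, hz'N⟩ h₁ h₂) hρc.not_ge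

lemma IsLinearlyRegularAt.adjacentCone_inter_contingentCone_subset {K₁ K₂ : Set E} {x₀ : E}
    (hreg : IsLinearlyRegularAt K₁ K₂ x₀) :
    adjacentCone K₁ x₀ ∩ contingentCone K₂ x₀ ⊆ contingentCone (K₁ ∩ K₂) x₀ := by
  obtain ⟨A, hA⟩ := hreg
  rintro v ⟨hv₁, t, w, ht0, ht, hw, hw₂⟩
  obtain ⟨u, hu, hu₁⟩ := hv₁ t ht0 ht
  have hpts : Tendsto (fun i => (x₀ + t i • u i, x₀ + t i • w i)) atTop (𝓝 (x₀, x₀)) := by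
    simpa using (tendsto_const_nhds.add (ht.smul hu)).prodMk_nhds
      (tendsto_const_nhds.add (ht.smul hw))
  refine mem_contingentCone_of_eventually_exists ht0 ht hu
    (by simpa using ((hu.sub hw).norm.const_mul A)) ?_
  filter_upwards [hpts.eventually hA] with i hi
  obtain ⟨p, hp, hpd⟩ := hi (hu₁ i) (hw₂ i)
  refine ⟨p, hp, hpd.trans_eq ?_⟩
  rw [add_sub_add_left_eq_sub, ← smul_sub, norm_smul_of_nonneg (ht0 i).le]
  ring

/-- Under derivability of `K₁` on `∂K₁ ∩ ∂K₂` and the transversality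
condition (◇) at `x₀`, `T_{K₁}(x₀) ∩ T_{K₂}(x₀) = T_{K₁ ∩ K₂}(x₀)`. -/
theorem contingent_cone_intersection {n : ℕ} (K₁ K₂ : Set (Euc n))
    (hK₁ : IsClosed K₁) (hK₂ : IsClosed K₂)
    (hder : ∀ x ∈ frontier K₁ ∩ frontier K₂, contingentCone K₁ x = adjacentCone K₁ x)
    (x₀ : Euc n) (hx₀ : x₀ ∈ frontier K₁ ∩ frontier K₂)
    (htrans : TransversalAt K₁ K₂ x₀) :
    contingentCone K₁ x₀ ∩ contingentCone K₂ x₀ = contingentCone (K₁ ∩ K₂) x₀ := by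
  refine Subset.antisymm ?_
    (subset_inter (contingentCone_mono inter_subset_left) (contingentCone_mono inter_subset_right))
  rw [hder x₀ hx₀]
  exact (htrans.isLinearlyRegularAt hK₁ hK₂).adjacentCone_inter_contingentCone_subset
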